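/- arXiv:math/9810190 — 2 statements merged into one kernel-verified Lean document; each statement's English description precedes it below -/
import Mathlib

section
/- Let G be the group defined by the presentation ⟨u,v,b,r | u²=v², bvbu=b⁻¹ub⁻¹v, u⁻¹b⁻¹vbr=ru⁻¹b⁻¹vb⟩ and let H be the subgroup of G generated by u² and bvbu. Then for every natural number n, the element (bub⁻¹v⁻¹)ⁿ(b⁻¹vbu⁻¹)ⁿ of G lies in H. -/
/-!
Put x = bub⁻¹v⁻¹, y = b⁻¹vbu⁻¹ and g = u²(bvbu)⁻¹ ∈ H. The two relations u² = v² and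
bvbu = b⁻¹ub⁻¹v give x = b²g⁻¹, y = b⁻¹gb⁻¹ and bgb⁻¹ = g⁻¹. Since b inverts g, b² commutes with g,
and xy = bg²b⁻¹ = g⁻². So x commutes with xy, hence with y, and xⁿyⁿ = (xy)ⁿ = g⁻²ⁿ ∈ H.
-/

/-- Generators u, v, b, r of the group G. -/
inductive GenG : Type
  | u | v | b | r
  deriving DecidableEq

/-- Relators of G = ⟨u,v,b,r | u²=v², bvbu=b⁻¹ub⁻¹v, u⁻¹b⁻¹vbr=ru⁻¹b⁻¹vb⟩. -/
def relsG : Set (FreeGroup GenG) :=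
  letI u := FreeGroup.of GenG.u
  letI v := FreeGroup.of GenG.v
  letI b := FreeGroup.of GenG.b
  letI r := FreeGroup.of GenG.r
  { u ^ 2 * (v ^ 2)⁻¹,
    b * v * b * u * (b⁻¹ * u * b⁻¹ * v)⁻¹,
    u⁻¹ * b⁻¹ * v * b * r * (r * u⁻¹ * b⁻¹ * v * b)⁻¹ }

/-- The element u² of G. -/
def h₁ : PresentedGroup relsG := PresentedGroup.of GenG.u ^ 2

/-- The element bvbu of G. -/
def h₂ : PresentedGroup relsG :=
  PresentedGroup.of GenG.b * PresentedGroup.of GenG.v *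
    PresentedGroup.of GenG.b * PresentedGroup.of GenG.u

/-- The subgroup H = ⟨u², bvbu⟩ of G. -/
def H : Subgroup (PresentedGroup relsG) := Subgroup.closure {h₁, h₂}

section InvertingConjugation

variable {G : Type*} [Group G] {b g : G}

theorem pow_mul_pow_eq_mul_pow_of_commute_mul {x y : G} (h : Commute x (x * y)) (n : ℕ) :
    x ^ n * y ^ n = (x * y) ^ n := by
  have hxy : Commute x y := by simpa using (Commute.inv_right (Commute.refl x)).mul_right h
  exact (hxy.mul_pow n).symm

theorem conj_inv_eq_of_conj_eq_inv (h : b * g * b⁻¹ = g⁻¹) : b * g⁻¹ * b⁻¹ = g :=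
  calc b * g⁻¹ * b⁻¹ = (b * g * b⁻¹)⁻¹ := by group
    _ = g := by rw [h, inv_inv]

theorem commute_sq_of_conj_eq_inv (h : b * g * b⁻¹ = g⁻¹) : Commute (b ^ 2) g := by
  refine mul_inv_eq_iff_eq_mul.mp ?_
  calc b ^ 2 * g * (b ^ 2)⁻¹ = b * (b * g * b⁻¹) * b⁻¹ := by rw [sq]; group
    _ = g := by rw [h, conj_inv_eq_of_conj_eq_inv h]

theorem mul_eq_inv_sq_of_conj_eq_inv (h : b * g * b⁻¹ = g⁻¹) :
    b ^ 2 * g⁻¹ * (b⁻¹ * g * b⁻¹) = (g ^ 2)⁻¹ :=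
  calc b ^ 2 * g⁻¹ * (b⁻¹ * g * b⁻¹) = b * (b * g⁻¹ * b⁻¹) * g * b⁻¹ := by rw [sq]; group
    _ = (b * g * b⁻¹) ^ 2 := by rw [conj_inv_eq_of_conj_eq_inv h, sq]; group
    _ = (g ^ 2)⁻¹ := by rw [h, inv_pow]

theorem pow_mul_pow_eq_inv_sq_pow_of_conj_eq_inv (h : b * g * b⁻¹ = g⁻¹) (n : ℕ) :
    (b ^ 2 * g⁻¹) ^ n * (b⁻¹ * g * b⁻¹) ^ n = (g ^ 2)⁻¹ ^ n := by
  have hprod := mul_eq_inv_sq_of_conj_eq_inv h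
  have hcomm : Commute (b ^ 2 * g⁻¹) (g ^ 2)⁻¹ :=
    ((commute_sq_of_conj_eq_inv h).pow_right 2).inv_right.mul_left
      ((Commute.refl g).pow_right 2).inv_inv
  rw [pow_mul_pow_eq_mul_pow_of_commute_mul (by rwa [hprod]), hprod]

end InvertingConjugation

namespace GenG

noncomputable abbrev U : PresentedGroup relsG := PresentedGroup.of GenG.u
noncomputable abbrev V : PresentedGroup relsG := PresentedGroup.of GenG.v
noncomputable abbrev B : PresentedGroup relsG := PresentedGroup.of GenG.b

theorem u_sq_eq_v_sq : U ^ 2 = V ^ 2 := by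
  have h := PresentedGroup.mk_eq_mk_of_mul_inv_mem (rels := relsG)
    (x := .of GenG.u ^ 2) (y := .of GenG.v ^ 2) (by simp [relsG])
  rw [map_pow, map_pow] at h
  exact h

theorem bvbu_eq : B * V * B * U = B⁻¹ * U * B⁻¹ * V := by
  have h := PresentedGroup.mk_eq_mk_of_mul_inv_mem (rels := relsG)
    (x := .of GenG.b * .of GenG.v * .of GenG.b * .of GenG.u)
    (y := (FreeGroup.of GenG.b)⁻¹ * .of GenG.u * (FreeGroup.of GenG.b)⁻¹ * .of GenG.v)
    (by simp [relsG])
  simp only [map_mul, map_inv] at h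
  exact h

noncomputable def g : PresentedGroup relsG := h₁ * h₂⁻¹

theorem g_mem_H : g ∈ H :=
  mul_mem (Subgroup.subset_closure (Set.mem_insert _ _))
    (inv_mem (Subgroup.subset_closure (Set.mem_insert_of_mem _ rfl)))

theorem inv_g_eq : g⁻¹ = B⁻¹ * U * B⁻¹ * V⁻¹ := by
  rw [g, mul_inv_rev, inv_inv, h₁, h₂, bvbu_eq, u_sq_eq_v_sq]
  group

theorem b_mul_g_mul_b_inv : B * g * B⁻¹ = g⁻¹ :=
  calc B * g * B⁻¹ = B * (g⁻¹)⁻¹ * B⁻¹ := by rw [inv_inv]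
    _ = h₂ * h₁⁻¹ := by rw [inv_g_eq, h₁, h₂]; group
    _ = g⁻¹ := by rw [g, mul_inv_rev, inv_inv]

theorem bub_inv_v_inv_eq : B * U * B⁻¹ * V⁻¹ = B ^ 2 * g⁻¹ := by
  rw [inv_g_eq]
  group

theorem b_inv_vbu_inv_eq : B⁻¹ * V * B * U⁻¹ = B⁻¹ * g * B⁻¹ := by
  rw [← inv_inv g, inv_g_eq]
  group

end GenG

/-- For every natural number n, the element (bub⁻¹v⁻¹)ⁿ(b⁻¹vbu⁻¹)ⁿ of G lies in H. -/
theorem mem_H :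
    ∀ n : ℕ,
      (PresentedGroup.of GenG.b * PresentedGroup.of GenG.u *
          (PresentedGroup.of GenG.b)⁻¹ * (PresentedGroup.of GenG.v)⁻¹) ^ n *
        ((PresentedGroup.of GenG.b)⁻¹ * PresentedGroup.of GenG.v *
          PresentedGroup.of GenG.b * (PresentedGroup.of GenG.u)⁻¹) ^ n ∈ H := by
  intro n
  rw [GenG.bub_inv_v_inv_eq, GenG.b_inv_vbu_inv_eq,
    pow_mul_pow_eq_inv_sq_pow_of_conj_eq_inv GenG.b_mul_g_mul_b_inv]
  exact pow_mem (inv_mem (pow_mem GenG.g_mem_H 2)) n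
end

section
/- Let G be the group defined by the presentation ⟨u,v,b,r | u²=v², bvbu=b⁻¹ub⁻¹v, u⁻¹b⁻¹vbr=ru⁻¹b⁻¹vb⟩ and let H be the subgroup of G generated by u² and bvbu. Then for every natural number n, the right cosets H·(bub⁻¹v⁻¹)ⁿ and H·b²ⁿ of H in G coincide; equivalently, (bub⁻¹v⁻¹)ⁿ·b⁻²ⁿ ∈ H. -/
open scoped Pointwise

/-!
Let `k = bvbu⁻¹ = h₂ h₁⁻¹ ∈ H`. Using `u² = v²`, the relation `bvbu = b⁻¹ub⁻¹v` rewrites `k` as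
`b⁻¹ub⁻¹v⁻¹`. The two forms of `k` show that `b⁻¹kb = k⁻¹`, so `b²` commutes with `k`, and that
`bub⁻¹v⁻¹ = b²k`. Hence `(bub⁻¹v⁻¹)ⁿ b⁻²ⁿ = kⁿ ∈ H`.
-/

section Group

variable {G : Type*} [Group G]

theorem commute_sq_of_inv_mul_mul_eq_inv {b k : G} (h : b⁻¹ * k * b = k⁻¹) :
    Commute (b ^ 2) k := by
  have hconj : (b ^ 2)⁻¹ * k * b ^ 2 = k :=
    calc (b ^ 2)⁻¹ * k * b ^ 2 = b⁻¹ * (b⁻¹ * k * b) * b := by rw [sq]; group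
      _ = b⁻¹ * k⁻¹ * b := by rw [h]
      _ = (b⁻¹ * k * b)⁻¹ := by group
      _ = k := by rw [h, inv_inv]
  calc b ^ 2 * k = b ^ 2 * ((b ^ 2)⁻¹ * k * b ^ 2) := by rw [hconj]
    _ = k * b ^ 2 := by group

theorem Commute.mul_pow_mul_inv_pow {a k : G} (h : Commute a k) (n : ℕ) :
    (a * k) ^ n * (a ^ n)⁻¹ = k ^ n := by
  rw [h.mul_pow, ((h.pow_left n).pow_right n).eq, mul_inv_cancel_right]

variable {u v b : G}

theorem bvbu_inv_eq (huv : u ^ 2 = v ^ 2) (hrel : b * v * b * u = b⁻¹ * u * b⁻¹ * v) :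
    b * v * b * u⁻¹ = b⁻¹ * u * b⁻¹ * v⁻¹ :=
  calc b * v * b * u⁻¹ = b * v * b * u * (u ^ 2)⁻¹ := by group
    _ = b⁻¹ * u * b⁻¹ * v * (v ^ 2)⁻¹ := by rw [hrel, huv]
    _ = b⁻¹ * u * b⁻¹ * v⁻¹ := by group

theorem bubv_pow_mul_inv_pow_eq_bvbu_pow (huv : u ^ 2 = v ^ 2)
    (hrel : b * v * b * u = b⁻¹ * u * b⁻¹ * v) (n : ℕ) :
    (b * u * b⁻¹ * v⁻¹) ^ n * (b ^ (2 * n))⁻¹ = (b * v * b * u⁻¹) ^ n := by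
  have hk := bvbu_inv_eq huv hrel
  have hinv : b⁻¹ * (b * v * b * u⁻¹) * b = (b * v * b * u⁻¹)⁻¹ := by
    nth_rewrite 2 [hk]; group
  have hx : b * u * b⁻¹ * v⁻¹ = b ^ 2 * (b * v * b * u⁻¹) := by rw [hk]; group
  rw [hx, pow_mul, (commute_sq_of_inv_mul_mul_eq_inv hinv).mul_pow_mul_inv_pow]

end Group

theorem of_u_sq_eq_of_v_sq :
    (PresentedGroup.of GenG.u : PresentedGroup relsG) ^ 2 = PresentedGroup.of GenG.v ^ 2 := by
  have h := PresentedGroup.mk_eq_mk_of_mul_inv_mem (rels := relsG)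
    (x := FreeGroup.of GenG.u ^ 2) (y := FreeGroup.of GenG.v ^ 2) (Or.inl rfl)
  simp only [map_pow] at h
  exact h

theorem of_bvbu_eq :
    (PresentedGroup.of GenG.b * PresentedGroup.of GenG.v * PresentedGroup.of GenG.b *
      PresentedGroup.of GenG.u : PresentedGroup relsG) =
    (PresentedGroup.of GenG.b)⁻¹ * PresentedGroup.of GenG.u * (PresentedGroup.of GenG.b)⁻¹ *
      PresentedGroup.of GenG.v := by
  have h := PresentedGroup.mk_eq_mk_of_mul_inv_mem (rels := relsG)
    (x := FreeGroup.of GenG.b * FreeGroup.of GenG.v * FreeGroup.of GenG.b * FreeGroup.of GenG.u)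
    (y := (FreeGroup.of GenG.b)⁻¹ * FreeGroup.of GenG.u * (FreeGroup.of GenG.b)⁻¹ *
      FreeGroup.of GenG.v) (Or.inr (Or.inl rfl))
  simp only [map_mul, map_inv] at h
  exact h

theorem bvbu_inv_mem_H : (PresentedGroup.of GenG.b * PresentedGroup.of GenG.v *
    PresentedGroup.of GenG.b * (PresentedGroup.of GenG.u)⁻¹ : PresentedGroup relsG) ∈ H := by
  have h₂_mul_h₁_inv : h₂ * h₁⁻¹ = PresentedGroup.of GenG.b * PresentedGroup.of GenG.v *
      PresentedGroup.of GenG.b * (PresentedGroup.of GenG.u)⁻¹ := by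
    rw [h₂, h₁]; group
  rw [← h₂_mul_h₁_inv]
  exact mul_mem (Subgroup.subset_closure (Or.inr rfl))
    (inv_mem (Subgroup.subset_closure (Or.inl rfl)))

/-- For every natural number n, the right cosets H·(bub⁻¹v⁻¹)ⁿ and H·b²ⁿ of H in G
coincide (a right coset H·g being the set `MulOpposite.op g • (H : Set G)`);
equivalently, (bub⁻¹v⁻¹)ⁿ · b⁻²ⁿ ∈ H. -/
theorem coset_representative :
    ∀ n : ℕ,
      MulOpposite.op (((PresentedGroup.of GenG.b * PresentedGroup.of GenG.u *
          (PresentedGroup.of GenG.b)⁻¹ * (PresentedGroup.of GenG.v)⁻¹) ^ n :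
            PresentedGroup relsG)) • (H : Set (PresentedGroup relsG)) =
        MulOpposite.op ((PresentedGroup.of GenG.b ^ (2 * n) : PresentedGroup relsG)) •
          (H : Set (PresentedGroup relsG)) ∧
      (PresentedGroup.of GenG.b * PresentedGroup.of GenG.u *
          (PresentedGroup.of GenG.b)⁻¹ * (PresentedGroup.of GenG.v)⁻¹) ^ n *
        (PresentedGroup.of GenG.b ^ (2 * n))⁻¹ ∈ H := by
  intro n
  have hmem := bubv_pow_mul_inv_pow_eq_bvbu_pow of_u_sq_eq_of_v_sq of_bvbu_eq n ▸
    pow_mem bvbu_inv_mem_H n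
  refine ⟨(rightCoset_eq_iff H).mpr ?_, hmem⟩
  simpa using inv_mem hmem
end
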